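/- Let Ω be a compact Riemannian manifold with boundary and β > 0. If τ₁(Ω) denotes the first nonzero eigenvalue of the Wentzell problem (Δu = 0 in Ω, −β Δ̄u + ∂u/∂η = τu on ∂Ω), p₁(Ω) the first nonzero Steklov eigenvalue, and λ₁ᶜ(∂Ω) the first nonzero closed eigenvalue of the Laplacian on ∂Ω, then τ₁(Ω) ≥ β λ₁ᶜ(∂Ω) + p₁(Ω). -/
import Mathlib


open MeasureTheory Real Set
open scoped RealInnerProductSpace

noncomputable section

/-- The `i`-th standard basis vector of `EuclideanSpace ℝ (Fin n)`. -/
def ebasis (n : ℕ) (i : Fin n) : EuclideanSpace ℝ (Fin n) := EuclideanSpace.single i 1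

variable {n : ℕ}

/-- The Hessian of `f` at `x`, as a bilinear form. -/
def hess (f : EuclideanSpace ℝ (Fin n) → ℝ) (x v w : EuclideanSpace ℝ (Fin n)) : ℝ :=
  ⟪fderiv ℝ (gradient f) x v, w⟫

/-- The Laplacian of `f` at `x` (trace of the Hessian). -/
def lap (f : EuclideanSpace ℝ (Fin n) → ℝ) (x : EuclideanSpace ℝ (Fin n)) : ℝ :=
  ∑ i, hess f x (ebasis n i) (ebasis n i)

/-- The drifting (weighted) Laplacian `L f = Δ f - ⟨∇φ, ∇f⟩`. -/
def driftLap (φ f : EuclideanSpace ℝ (Fin n) → ℝ) (x : EuclideanSpace ℝ (Fin n)) : ℝ :=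
  lap f x - ⟪gradient φ x, gradient f x⟫

/-- Divergence of a vector field. -/
def divg (F : EuclideanSpace ℝ (Fin n) → EuclideanSpace ℝ (Fin n))
    (x : EuclideanSpace ℝ (Fin n)) : ℝ :=
  ∑ i, ⟪fderiv ℝ F x (ebasis n i), ebasis n i⟫

/-- Tangential (boundary) gradient of `f` relative to the unit normal field `η`. -/
def tgrad (η : EuclideanSpace ℝ (Fin n) → EuclideanSpace ℝ (Fin n))
    (f : EuclideanSpace ℝ (Fin n) → ℝ) (x : EuclideanSpace ℝ (Fin n)) :
    EuclideanSpace ℝ (Fin n) :=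
  gradient f x - ⟪gradient f x, η x⟫ • η x

/-- Squared Hilbert–Schmidt norm of the Hessian of `f` at `x`. -/
def hessNormSq (f : EuclideanSpace ℝ (Fin n) → ℝ) (x : EuclideanSpace ℝ (Fin n)) : ℝ :=
  ∑ i, ∑ j, (hess f x (ebasis n i) (ebasis n j)) ^ 2

/-- Mean curvature of the boundary computed from the unit normal field `η`
(the shape operator is `v ↦ ∇_v η`). -/
def meanCurv (η : EuclideanSpace ℝ (Fin n) → EuclideanSpace ℝ (Fin n))
    (x : EuclideanSpace ℝ (Fin n)) : ℝ :=
  (divg η x - ⟪fderiv ℝ η x (η x), η x⟫) / ((n : ℝ) - 1)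

/-- Weighted mean curvature `H^φ = H + (1/(n-1)) ∂φ/∂η`. -/
def weightedMeanCurv (η : EuclideanSpace ℝ (Fin n) → EuclideanSpace ℝ (Fin n))
    (φ : EuclideanSpace ℝ (Fin n) → ℝ) (x : EuclideanSpace ℝ (Fin n)) : ℝ :=
  meanCurv η x + ⟪gradient φ x, η x⟫ / ((n : ℝ) - 1)

/-- Second fundamental form `II(v,w) = ⟨∇_v η, w⟩` of the boundary. -/
def secondFF (η : EuclideanSpace ℝ (Fin n) → EuclideanSpace ℝ (Fin n))
    (x v w : EuclideanSpace ℝ (Fin n)) : ℝ :=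
  ⟪fderiv ℝ η x v, w⟫

/-- The boundary (intrinsic) Laplacian of `f|_{∂Ω}`: the tangential trace of the
derivative of the tangential gradient. -/
def barLap (η : EuclideanSpace ℝ (Fin n) → EuclideanSpace ℝ (Fin n))
    (f : EuclideanSpace ℝ (Fin n) → ℝ) (x : EuclideanSpace ℝ (Fin n)) : ℝ :=
  divg (fun y => tgrad η f y) x - ⟪fderiv ℝ (fun y => tgrad η f y) x (η x), η x⟫

/-- The boundary drifting Laplacian `L̄ z = Δ̄ z - ⟨∇̄φ, ∇̄z⟩`. -/
def barDriftLap (η : EuclideanSpace ℝ (Fin n) → EuclideanSpace ℝ (Fin n))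
    (φ f : EuclideanSpace ℝ (Fin n) → ℝ) (x : EuclideanSpace ℝ (Fin n)) : ℝ :=
  barLap η f x - ⟪tgrad η φ x, tgrad η f x⟫

/-- For a compact domain `Ω` with boundary and `β > 0`, the first nonzero
Wentzell eigenvalue `τ₁` (variationally characterized), the first nonzero Steklov
eigenvalue `p₁` and the first nonzero closed boundary eigenvalue `λ₁ᶜ` satisfy
`τ₁ ≥ β λ₁ᶜ + p₁`. -/
theorem wentzell_splitting_lower_bound (n : ℕ) (hn : 2 ≤ n)
    (Ω : Set (EuclideanSpace ℝ (Fin n))) (hΩ : IsCompact (closure Ω))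
    (A : Measure (EuclideanSpace ℝ (Fin n)))
    (η : EuclideanSpace ℝ (Fin n) → EuclideanSpace ℝ (Fin n))
    (hη : ∀ x ∈ frontier Ω, ‖η x‖ = 1)
    (β : ℝ) (hβ : 0 < β) (τ₁ p₁ lam1c : ℝ)
    (hτ : τ₁ = sInf {t : ℝ | ∃ u : EuclideanSpace ℝ (Fin n) → ℝ, ContDiff ℝ (⊤ : ℕ∞) u ∧
      (∫ x in frontier Ω, (u x) ^ 2 ∂A) ≠ 0 ∧ (∫ x in frontier Ω, u x ∂A) = 0 ∧
      t = ((∫ x in Ω, ‖gradient u x‖ ^ 2)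
            + β * ∫ x in frontier Ω, ‖tgrad η u x‖ ^ 2 ∂A) /
          (∫ x in frontier Ω, (u x) ^ 2 ∂A)})
    (hp : p₁ = sInf {t : ℝ | ∃ u : EuclideanSpace ℝ (Fin n) → ℝ, ContDiff ℝ (⊤ : ℕ∞) u ∧
      (∫ x in frontier Ω, (u x) ^ 2 ∂A) ≠ 0 ∧ (∫ x in frontier Ω, u x ∂A) = 0 ∧
      t = (∫ x in Ω, ‖gradient u x‖ ^ 2) / (∫ x in frontier Ω, (u x) ^ 2 ∂A)})
    (hlam : lam1c = sInf {t : ℝ | ∃ u : EuclideanSpace ℝ (Fin n) → ℝ, ContDiff ℝ (⊤ : ℕ∞) u ∧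
      (∫ x in frontier Ω, (u x) ^ 2 ∂A) ≠ 0 ∧ (∫ x in frontier Ω, u x ∂A) = 0 ∧
      t = (∫ x in frontier Ω, ‖tgrad η u x‖ ^ 2 ∂A) /
          (∫ x in frontier Ω, (u x) ^ 2 ∂A)}) :
    β * lam1c + p₁ ≤ τ₁ := by
  by_cases hne : ∃ u : EuclideanSpace ℝ (Fin n) → ℝ, ContDiff ℝ (⊤ : ℕ∞) u ∧
      (∫ x in frontier Ω, (u x) ^ 2 ∂A) ≠ 0 ∧ (∫ x in frontier Ω, u x ∂A) = 0
  · subst hτ hp hlam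
    apply le_csInf
    · obtain ⟨u, h1, h2, h3⟩ := hne
      exact ⟨_, u, h1, h2, h3, rfl⟩
    · rintro t ⟨u, hu, hS, hM, rfl⟩
      have hSpos : 0 < ∫ x in frontier Ω, (u x) ^ 2 ∂A :=
        lt_of_le_of_ne (integral_nonneg fun x => sq_nonneg _) (Ne.symm hS)
      have hI : 0 ≤ ∫ x in Ω, ‖gradient u x‖ ^ 2 :=
        integral_nonneg fun x => by positivity
      have hJ : 0 ≤ ∫ x in frontier Ω, ‖tgrad η u x‖ ^ 2 ∂A :=
        integral_nonneg fun x => by positivity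
      have hbdd : ∀ (F : (EuclideanSpace ℝ (Fin n) → ℝ) → ℝ), (∀ u, 0 ≤ F u) →
          BddBelow {t : ℝ | ∃ u : EuclideanSpace ℝ (Fin n) → ℝ, ContDiff ℝ (⊤ : ℕ∞) u ∧
            (∫ x in frontier Ω, (u x) ^ 2 ∂A) ≠ 0 ∧ (∫ x in frontier Ω, u x ∂A) = 0 ∧
            t = F u / (∫ x in frontier Ω, (u x) ^ 2 ∂A)} := by
        intro F hF
        refine ⟨0, ?_⟩
        rintro t ⟨v, hv, hvS, hvM, rfl⟩
        have : 0 ≤ ∫ x in frontier Ω, (v x) ^ 2 ∂A := integral_nonneg fun x => sq_nonneg _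
        exact div_nonneg (hF v) this
      have hp1 : sInf {t : ℝ | ∃ u : EuclideanSpace ℝ (Fin n) → ℝ, ContDiff ℝ (⊤ : ℕ∞) u ∧
            (∫ x in frontier Ω, (u x) ^ 2 ∂A) ≠ 0 ∧ (∫ x in frontier Ω, u x ∂A) = 0 ∧
            t = (∫ x in Ω, ‖gradient u x‖ ^ 2) / (∫ x in frontier Ω, (u x) ^ 2 ∂A)}
          ≤ (∫ x in Ω, ‖gradient u x‖ ^ 2) / (∫ x in frontier Ω, (u x) ^ 2 ∂A) :=
        csInf_le (hbdd _ fun v => integral_nonneg fun x => by positivity)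
          ⟨u, hu, hS, hM, rfl⟩
      have hl1 : sInf {t : ℝ | ∃ u : EuclideanSpace ℝ (Fin n) → ℝ, ContDiff ℝ (⊤ : ℕ∞) u ∧
            (∫ x in frontier Ω, (u x) ^ 2 ∂A) ≠ 0 ∧ (∫ x in frontier Ω, u x ∂A) = 0 ∧
            t = (∫ x in frontier Ω, ‖tgrad η u x‖ ^ 2 ∂A) / (∫ x in frontier Ω, (u x) ^ 2 ∂A)}
          ≤ (∫ x in frontier Ω, ‖tgrad η u x‖ ^ 2 ∂A) / (∫ x in frontier Ω, (u x) ^ 2 ∂A) :=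
        csInf_le (hbdd _ fun v => integral_nonneg fun x => by positivity)
          ⟨u, hu, hS, hM, rfl⟩
      calc β * sInf {t : ℝ | ∃ u : EuclideanSpace ℝ (Fin n) → ℝ, ContDiff ℝ (⊤ : ℕ∞) u ∧
            (∫ x in frontier Ω, (u x) ^ 2 ∂A) ≠ 0 ∧ (∫ x in frontier Ω, u x ∂A) = 0 ∧
            t = (∫ x in frontier Ω, ‖tgrad η u x‖ ^ 2 ∂A) / (∫ x in frontier Ω, (u x) ^ 2 ∂A)}
            + sInf {t : ℝ | ∃ u : EuclideanSpace ℝ (Fin n) → ℝ, ContDiff ℝ (⊤ : ℕ∞) u ∧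
            (∫ x in frontier Ω, (u x) ^ 2 ∂A) ≠ 0 ∧ (∫ x in frontier Ω, u x ∂A) = 0 ∧
            t = (∫ x in Ω, ‖gradient u x‖ ^ 2) / (∫ x in frontier Ω, (u x) ^ 2 ∂A)}
          ≤ β * ((∫ x in frontier Ω, ‖tgrad η u x‖ ^ 2 ∂A) / (∫ x in frontier Ω, (u x) ^ 2 ∂A))
            + (∫ x in Ω, ‖gradient u x‖ ^ 2) / (∫ x in frontier Ω, (u x) ^ 2 ∂A) := by
            gcongr
        _ = ((∫ x in Ω, ‖gradient u x‖ ^ 2)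
              + β * ∫ x in frontier Ω, ‖tgrad η u x‖ ^ 2 ∂A) /
            (∫ x in frontier Ω, (u x) ^ 2 ∂A) := by
            field_simp
            ring
  · have hempty : ∀ (F : (EuclideanSpace ℝ (Fin n) → ℝ) → ℝ),
        {t : ℝ | ∃ u : EuclideanSpace ℝ (Fin n) → ℝ, ContDiff ℝ (⊤ : ℕ∞) u ∧
          (∫ x in frontier Ω, (u x) ^ 2 ∂A) ≠ 0 ∧ (∫ x in frontier Ω, u x ∂A) = 0 ∧
          t = F u} = (∅ : Set ℝ) := by
      intro F
      apply eq_empty_iff_forall_notMem.mpr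
      rintro t ⟨v, h1, h2, h3, _⟩
      exact hne ⟨v, h1, h2, h3⟩
    rw [hτ, hp, hlam, hempty, hempty, hempty, Real.sInf_empty]
    simp
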